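/- arXiv:2403.04100 — 5 statements merged into one kernel-verified Lean document; each statement's English description precedes it below -/
import Mathlib

section
/- Left-to-right column additions preserve, for every pair of indices (i, j), the rank of the lower-left submatrix M[i..n, 1..j]; consequently the set of pairs (low(R_j), j) over nonzero columns of any reduced form R of M is independent of the reduction performed (uniqueness of the persistence pairing). -/
/-- Left-to-right column addition over ℤ/2: add column `i` to column `j`. -/
def colAdd {n : ℕ} (M : Matrix (Fin n) (Fin n) (ZMod 2)) (i j : Fin n) :
    Matrix (Fin n) (Fin n) (ZMod 2) :=
  fun r c => if c = j then M r j + M r i else M r c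

/-- One step of left-to-right column reduction: add some column `i` to a
later column `j`. -/
def Step {n : ℕ} (M N : Matrix (Fin n) (Fin n) (ZMod 2)) : Prop :=
  ∃ i j : Fin n, i < j ∧ N = colAdd M i j

/-- `R` is obtained from `M` by a finite sequence of left-to-right column
additions. -/
def Reduces {n : ℕ} (M R : Matrix (Fin n) (Fin n) (ZMod 2)) : Prop :=
  Relation.ReflTransGen Step M R

/-- `i` is the lowest one (largest row index of a nonzero entry) of
column `j` of `R`. -/
def IsLow {n : ℕ} (R : Matrix (Fin n) (Fin n) (ZMod 2)) (i j : Fin n) : Prop :=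
  R i j ≠ 0 ∧ ∀ r, R r j ≠ 0 → r ≤ i

/-- A matrix is reduced if distinct nonzero columns have distinct lowest ones. -/
def Reduced {n : ℕ} (R : Matrix (Fin n) (Fin n) (ZMod 2)) : Prop :=
  ∀ i j j', IsLow R i j → IsLow R i j' → j = j'

/-- Rank over ℤ/2 of the lower-left submatrix of `M` consisting of the rows
with (0-based) index ≥ i and the first j columns (0-based index < j). -/
noncomputable def rankLL {n : ℕ} (M : Matrix (Fin n) (Fin n) (ZMod 2)) (i j : ℕ) : ℕ :=
  (M.submatrix (fun r : {r : Fin n // i ≤ r.val} => r.1)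
    (fun c : {c : Fin n // c.val < j} => c.1)).rank

/-!
Adding column `i` to a later column `j` is right multiplication by a transvection, and since
`i < j` this transvection restricts to every block of leading columns that contains column `j`;
so all lower-left ranks are invariant. In a reduced matrix the nonzero columns of any lower-left
block still have distinct lowest ones, hence are linearly independent, and `rankLL R i j`
counts the columns `c < j` with a nonzero entry in a row `≥ i`. Thus `low(R_j) = i` exactly
when this count jumps at column `j` for the threshold `i` but not for `i + 1`, a condition
expressed by the invariant ranks alone.
-/

open Finset Matrix

section LastNonzero

variable {ι σ κ K : Type*} [LinearOrder σ] [Field K]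

def IsLastNonzero (v : σ → K) (r : σ) : Prop :=
  v r ≠ 0 ∧ ∀ r', v r' ≠ 0 → r' ≤ r

theorem exists_isLastNonzero [Finite σ] {v : σ → K} (hv : v ≠ 0) :
    ∃ r, IsLastNonzero v r := by
  obtain ⟨r, hr⟩ := Function.ne_iff.mp hv
  have : Nonempty {r // v r ≠ 0} := ⟨⟨r, hr⟩⟩
  obtain ⟨⟨m, hm⟩, hmax⟩ := Finite.exists_max (fun r : {r // v r ≠ 0} => r.1)
  exact ⟨m, hm, fun r' hr' => hmax ⟨r', hr'⟩⟩

theorem linearIndependent_of_isLastNonzero {v : ι → σ → K} (low : ι → σ)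
    (hlow : ∀ c, IsLastNonzero (v c) (low c)) (hinj : Function.Injective low) :
    LinearIndependent K v := by
  classical
  rw [linearIndependent_iff']
  intro s g hg c hc
  by_contra hgc
  obtain ⟨m, hm, hmax⟩ :=
    (s.filter (g · ≠ 0)).exists_max_image low ⟨c, by simp [hc, hgc]⟩
  rw [mem_filter] at hm
  have hsum := congrFun hg (low m)
  rw [Finset.sum_apply, sum_eq_single_of_mem m hm.1] at hsum
  · exact mul_ne_zero hm.2 (hlow m).1 hsum
  · intro c' hc' hne
    by_cases hgc' : g c' = 0
    · simp [hgc']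
    have hlt : low c' < low m :=
      (hmax c' (mem_filter.mpr ⟨hc', hgc'⟩)).lt_of_ne (hinj.ne hne)
    have : v c' (low m) = 0 := by
      by_contra h
      exact (hlt.trans_le ((hlow c').2 _ h)).false
    simp [this]

theorem Matrix.rank_eq_card_ne_zero_cols [Finite σ] [Fintype κ] (A : Matrix σ κ K)
    (hA : ∀ r c c', IsLastNonzero (Aᵀ c) r → IsLastNonzero (Aᵀ c') r → c = c') :
    A.rank = Nat.card {c // Aᵀ c ≠ 0} := by
  classical
  choose low hlow using fun c : {c // Aᵀ c ≠ 0} => exists_isLastNonzero c.2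
  have hli : LinearIndependent K fun c : {c // Aᵀ c ≠ 0} => Aᵀ c :=
    linearIndependent_of_isLastNonzero low hlow fun c c' h =>
      Subtype.ext (hA _ c c' (hlow c) (h ▸ hlow c'))
  have hspan : Submodule.span K (Set.range A.col) =
      Submodule.span K (Set.range fun c : {c // Aᵀ c ≠ 0} => Aᵀ c) := by
    refine le_antisymm (Submodule.span_le.mpr ?_) (Submodule.span_mono ?_)
    · rintro _ ⟨c, rfl⟩
      by_cases hc : Aᵀ c = 0
      · change Aᵀ c ∈ _
        rw [hc]
        exact Submodule.zero_mem _
      · exact Submodule.subset_span ⟨⟨c, hc⟩, rfl⟩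
    · rintro _ ⟨c, rfl⟩
      exact ⟨c.1, rfl⟩
  rw [rank_eq_finrank_span_cols, hspan, finrank_span_eq_card hli, Nat.card_eq_fintype_card]

end LastNonzero

section ColumnReduction

variable {n : ℕ}

theorem submatrix_colAdd_of_val_lt {ρ : Type*} (M : Matrix (Fin n) (Fin n) (ZMod 2))
    (f : ρ → Fin n) {i j : Fin n} {b : ℕ} (hij : i < j) (hj : j.val < b) :
    (colAdd M i j).submatrix f (fun c : {c : Fin n // c.val < b} => c.1) =
      M.submatrix f (fun c : {c : Fin n // c.val < b} => c.1) *
        transvection (⟨i, lt_trans (α := ℕ) hij hj⟩ : {c : Fin n // c.val < b}) ⟨j, hj⟩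
          (1 : ZMod 2) := by
  funext r c
  by_cases hc : c = ⟨j, hj⟩
  · subst hc
    rw [mul_transvection_apply_same]
    simp [colAdd, add_comm]
  · have hc' : c.val ≠ j := fun h => hc (Subtype.ext h)
    rw [mul_transvection_apply_of_ne (hb := hc)]
    simp [colAdd, hc']

theorem submatrix_colAdd_of_le_val {ρ : Type*} (M : Matrix (Fin n) (Fin n) (ZMod 2))
    (f : ρ → Fin n) (i : Fin n) {j : Fin n} {b : ℕ} (hj : b ≤ j.val) :
    (colAdd M i j).submatrix f (fun c : {c : Fin n // c.val < b} => c.1) =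
      M.submatrix f (fun c : {c : Fin n // c.val < b} => c.1) := by
  funext r c
  have hc : c.val ≠ j := fun h => (h ▸ c.2).not_ge hj
  simp [colAdd, hc]

theorem rankLL_colAdd (M : Matrix (Fin n) (Fin n) (ZMod 2)) {i j : Fin n} (hij : i < j)
    (a b : ℕ) : rankLL (colAdd M i j) a b = rankLL M a b := by
  unfold rankLL
  rcases lt_or_ge j.val b with hj | hj
  · rw [submatrix_colAdd_of_val_lt M _ hij hj, rank_mul_eq_left_of_isUnit_det]
    rw [det_transvection_of_ne _ _ fun h => hij.ne (congrArg Subtype.val h)]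
    exact isUnit_one
  · rw [submatrix_colAdd_of_le_val M _ i hj]

theorem Reduces.rankLL_eq {M R : Matrix (Fin n) (Fin n) (ZMod 2)} (h : Reduces M R)
    (a b : ℕ) : rankLL R a b = rankLL M a b := by
  induction h with
  | refl => rfl
  | tail _ hstep ih =>
    obtain ⟨i, j, hij, rfl⟩ := hstep
    rw [rankLL_colAdd _ hij, ih]

end ColumnReduction

section Pairing

variable {n : ℕ} {R : Matrix (Fin n) (Fin n) (ZMod 2)}

theorem isLow_iff_exists_ne_zero (i j : Fin n) :
    IsLow R i j ↔
      (∃ r : Fin n, i.val ≤ r.val ∧ R r j ≠ 0) ∧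
        ¬∃ r : Fin n, i.val + 1 ≤ r.val ∧ R r j ≠ 0 := by
  constructor
  · rintro ⟨hi, hle⟩
    exact ⟨⟨i, le_rfl, hi⟩, fun ⟨r, hr, hrj⟩ => (hle r hrj).not_gt hr⟩
  · rintro ⟨⟨r, hir, hr⟩, hbelow⟩
    have hle : ∀ r', R r' j ≠ 0 → r' ≤ i := fun r' hr' =>
      not_lt.mp fun h => hbelow ⟨r', h, hr'⟩
    have hri : r = i := le_antisymm (hle r hr) hir
    exact ⟨hri ▸ hr, hle⟩

theorem isLow_of_isLastNonzero_submatrix {a b : ℕ} {r : {r : Fin n // a ≤ r.val}}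
    {c : {c : Fin n // c.val < b}}
    (h : IsLastNonzero ((R.submatrix (fun r : {r : Fin n // a ≤ r.val} => r.1)
      (fun c : {c : Fin n // c.val < b} => c.1))ᵀ c) r) :
    IsLow R r c := by
  refine ⟨h.1, fun r' hr' => ?_⟩
  rcases le_or_gt a r'.val with hr'a | hr'a
  · exact h.2 ⟨r', hr'a⟩ hr'
  · exact (lt_of_lt_of_le hr'a r.2).le

theorem rankLL_eq_card (hR : Reduced R) (a b : ℕ) :
    rankLL R a b = #{c : Fin n | c.val < b ∧ ∃ r : Fin n, a ≤ r.val ∧ R r c ≠ 0} := by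
  rw [rankLL, rank_eq_card_ne_zero_cols _ fun r c c' h h' => Subtype.ext <|
    hR _ _ _ (isLow_of_isLastNonzero_submatrix h) (isLow_of_isLastNonzero_submatrix h'),
    ← Fintype.card_subtype, ← Nat.card_eq_fintype_card]
  refine Nat.card_congr ((Equiv.subtypeEquivRight fun c => ?_).trans
    (Equiv.subtypeSubtypeEquivSubtypeInter _ _))
  simp [Function.ne_iff]

theorem rankLL_succ (hR : Reduced R) (a : ℕ) (j : Fin n) :
    rankLL R a (j.val + 1) =
      rankLL R a j.val + if ∃ r : Fin n, a ≤ r.val ∧ R r j ≠ 0 then 1 else 0 := by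
  have hsplit : ∀ c : Fin n, c.val < j.val + 1 ↔ c.val < j.val ∨ c = j := by
    intro c
    rw [Fin.ext_iff]
    omega
  rw [rankLL_eq_card hR, rankLL_eq_card hR]
  simp only [hsplit, or_and_right, filter_or]
  rw [card_union_of_disjoint (disjoint_filter.mpr fun c _ hlt heq => ?_)]
  · congr 1
    rw [← filter_filter, filter_eq' univ j, if_pos (mem_univ j), filter_singleton]
    split_ifs <;> rfl
  · exact lt_irrefl _ (heq.1 ▸ hlt.1)

theorem rankLL_lt_rankLL_succ_iff (hR : Reduced R) (a : ℕ) (j : Fin n) :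
    rankLL R a j.val < rankLL R a (j.val + 1) ↔ ∃ r : Fin n, a ≤ r.val ∧ R r j ≠ 0 := by
  rw [rankLL_succ hR]
  split_ifs with hj <;> simp [hj]

theorem isLow_iff_rankLL (hR : Reduced R) (i j : Fin n) :
    IsLow R i j ↔
      rankLL R i j < rankLL R i (j + 1) ∧ ¬rankLL R (i + 1) j < rankLL R (i + 1) (j + 1) := by
  rw [isLow_iff_exists_ne_zero, rankLL_lt_rankLL_succ_iff hR, rankLL_lt_rankLL_succ_iff hR]

end Pairing

/-- left-to-right column additions preserve the ranks of all
lower-left submatrices; consequently, the set of pairs (low(R_j), j) over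
nonzero columns of a reduced form is independent of the reduction performed. -/
theorem rankLL_invariant_and_pairing_unique
    {n : ℕ} (M : Matrix (Fin n) (Fin n) (ZMod 2)) :
    (∀ R, Reduces M R → ∀ i j : ℕ, rankLL R i j = rankLL M i j) ∧
    (∀ R R', Reduces M R → Reduced R → Reduces M R' → Reduced R' →
      {p : Fin n × Fin n | IsLow R p.1 p.2} = {p : Fin n × Fin n | IsLow R' p.1 p.2}) := by
  refine ⟨fun R hMR => hMR.rankLL_eq, fun R R' hMR hR hMR' hR' => ?_⟩
  ext ⟨i, j⟩
  simp only [Set.mem_ofPred_eq, isLow_iff_rankLL hR, isLow_iff_rankLL hR', hMR.rankLL_eq,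
    hMR'.rankLL_eq]
end

section
/- If (i, j) is a persistence pair of a reduced boundary matrix R (i.e., i = low(R_j)), then the chain represented by column R_j is a cycle in K_i that is not a boundary in K_{j-1} but becomes a boundary in K_j; i.e., its homology class is born at index i and dies at index j. -/
noncomputable def bnd (V : Type) [DecidableEq V] :
    (Finset V →₀ ZMod 2) →ₗ[ZMod 2] (Finset V →₀ ZMod 2) :=
  Finsupp.lsum ℕ fun s =>
    (LinearMap.id : ZMod 2 →ₗ[ZMod 2] ZMod 2).smulRight
      (∑ v ∈ s, Finsupp.single (s.erase v) (1 : ZMod 2))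

/-- Chains supported on a given set of simplices. -/
noncomputable def chainsOn {V : Type} [DecidableEq V] (S : Set (Finset V)) :
    Submodule (ZMod 2) (Finset V →₀ ZMod 2) :=
  Finsupp.supported (ZMod 2) (ZMod 2) S

/-- Cycles supported on a given set of simplices. -/
noncomputable def cyclesOn {V : Type} [DecidableEq V] (S : Set (Finset V)) :
    Submodule (ZMod 2) (Finset V →₀ ZMod 2) :=
  chainsOn S ⊓ LinearMap.ker (bnd V)

/-- Boundaries of chains supported on a given set of simplices. -/
noncomputable def boundariesOn {V : Type} [DecidableEq V] (S : Set (Finset V)) :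
    Submodule (ZMod 2) (Finset V →₀ ZMod 2) :=
  Submodule.map (bnd V) (chainsOn S)

/-- The ℤ/2 boundary matrix of a sequence of simplices `σ`:
entry (i,j) is 1 iff `σ i` is a codimension-1 face of `σ j`. -/
def bmat {V : Type} [DecidableEq V] {n : ℕ} (σ : Fin n → Finset V) :
    Matrix (Fin n) (Fin n) (ZMod 2) :=
  fun i j => if σ i ⊆ σ j ∧ (σ i).card + 1 = (σ j).card then 1 else 0

/-- The chain represented by column `j` of the matrix `R`: the sum of the
simplices whose row indices carry nonzero entries. -/
noncomputable def chainOf {V : Type} [DecidableEq V] {n : ℕ} (σ : Fin n → Finset V)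
    (R : Matrix (Fin n) (Fin n) (ZMod 2)) (j : Fin n) : Finset V →₀ ZMod 2 :=
  ∑ i : Fin n, Finsupp.single (σ i) (R i j)

lemma addself {α : Type*} [AddCommMonoid α] [Module (ZMod 2) α] (x : α) : x + x = 0 := by
  have h : (2 : ZMod 2) • x = x + x := two_smul _ x
  rw [show (2 : ZMod 2) = 0 by decide, zero_smul] at h
  exact h.symm

lemma cancel2 {α : Type*} [AddCommMonoid α] [Module (ZMod 2) α] {x y z : α}
    (h : x = y + z) : y = x + z := by
  rw [h, add_assoc, addself, add_zero]

lemma bnd_single {V : Type} [DecidableEq V] (s : Finset V) (a : ZMod 2) :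
    bnd V (Finsupp.single s a) = a • ∑ v ∈ s, Finsupp.single (s.erase v) (1 : ZMod 2) := by
  simp [bnd]

lemma bnd_bnd {V : Type} [DecidableEq V] (x : Finset V →₀ ZMod 2) : bnd V (bnd V x) = 0 := by
  have : (bnd V).comp (bnd V) = 0 := by
    apply Finsupp.lhom_ext
    intro s a
    simp only [LinearMap.comp_apply, LinearMap.zero_apply, bnd_single, map_smul, map_sum]
    simp only [one_smul]
    rw [Finset.sum_sigma' s (fun v => s.erase v)
      (fun v w => Finsupp.single ((s.erase v).erase w) (1 : ZMod 2))]
    rw [Finset.sum_involution (g := fun p _ => (⟨p.2, p.1⟩ : Σ _ : V, V))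
      (hg₁ := ?_) (hg₃ := ?_) (g_mem := ?_) (hg₄ := ?_)]
    · simp
    · rintro ⟨v, w⟩ h
      simp only
      rw [Finset.erase_right_comm]
      exact addself _
    · intro p h _
      simp only [Finset.mem_sigma, Finset.mem_erase] at h
      intro heq
      have : p.2 = p.1 := congrArg Sigma.fst heq
      exact h.2.1 (this ▸ rfl)
    · rintro ⟨v, w⟩ h
      simp only [Finset.mem_sigma, Finset.mem_erase] at h ⊢
      exact ⟨h.2.2, Ne.symm h.2.1, h.1⟩
    · rintro ⟨v, w⟩ h
      rfl
  exact DFunLike.congr_fun this x ▸ rfl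

def Comb {n : ℕ} (A B : Matrix (Fin n) (Fin n) (ZMod 2)) : Prop :=
  ∀ j, ∃ a : Fin n → ZMod 2, (∀ k, j < k → a k = 0) ∧ ∀ r, B r j = ∑ k, A r k * a k

lemma comb_refl {n : ℕ} (A : Matrix (Fin n) (Fin n) (ZMod 2)) : Comb A A := by
  intro j
  refine ⟨fun k => if k = j then 1 else 0, fun k hk => if_neg (by rintro rfl; exact absurd hk (lt_irrefl _)), fun r => ?_⟩
  simp [Finset.sum_ite_eq']

lemma step_symm {n : ℕ} {A B : Matrix (Fin n) (Fin n) (ZMod 2)} (h : Step A B) : Step B A := by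
  obtain ⟨i, j, hij, rfl⟩ := h
  refine ⟨i, j, hij, ?_⟩
  have hij' : i ≠ j := ne_of_lt hij
  funext r c
  by_cases hc : c = j
  · simp only [colAdd, hc, if_pos rfl, if_neg hij']
    generalize A r j = x
    generalize A r i = y
    revert x y
    decide
  · simp [colAdd, hc]

lemma comb_step {n : ℕ} {A B : Matrix (Fin n) (Fin n) (ZMod 2)} (h : Step A B) : Comb A B := by
  obtain ⟨i, j, hij, rfl⟩ := h
  intro c
  by_cases hc : c = j
  · refine ⟨fun k => (if k = j then 1 else 0) + (if k = i then 1 else 0), fun k hk => ?_, fun r => ?_⟩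
    · rw [hc] at hk
      show ((if k = j then (1:ZMod 2) else 0) + if k = i then 1 else 0) = 0
      rw [if_neg (by rintro rfl; exact absurd hk (lt_irrefl _)),
        if_neg (by rintro rfl; exact absurd (hij.trans hk) (lt_irrefl _))]
      rfl
    · subst hc
      simp [colAdd, mul_add, Finset.sum_add_distrib, Finset.sum_ite_eq']
  · refine ⟨fun k => if k = c then 1 else 0, fun k hk => if_neg (by rintro rfl; exact absurd hk (lt_irrefl _)), fun r => ?_⟩
    simp [colAdd, hc, Finset.sum_ite_eq']

lemma comb_trans {n : ℕ} {A B C : Matrix (Fin n) (Fin n) (ZMod 2)}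
    (h1 : Comb A B) (h2 : Comb B C) : Comb A C := by
  intro j
  obtain ⟨b, hb0, hb⟩ := h2 j
  choose a ha0 ha using h1
  refine ⟨fun l => ∑ k, a k l * b k, fun l hl => ?_, fun r => ?_⟩
  · refine Finset.sum_eq_zero fun k _ => ?_
    by_cases hbk : b k = 0
    · rw [hbk, mul_zero]
    · have hkj : k ≤ j := not_lt.1 fun h => hbk (hb0 k h)
      rw [ha0 k l (lt_of_le_of_lt hkj hl), zero_mul]
  · rw [hb r]
    have : ∀ k, B r k * b k = ∑ l, A r l * a k l * b k := by
      intro k; rw [ha k r, Finset.sum_mul]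
    simp_rw [this]
    rw [Finset.sum_comm]
    refine Finset.sum_congr rfl fun l _ => ?_
    rw [Finset.mul_sum]
    refine Finset.sum_congr rfl fun k _ => ?_
    ring

lemma reduces_comb {n : ℕ} {M R : Matrix (Fin n) (Fin n) (ZMod 2)} (h : Reduces M R) :
    Comb M R ∧ Comb R M := by
  induction h with
  | refl => exact ⟨comb_refl M, comb_refl M⟩
  | tail _ hstep ih =>
    exact ⟨comb_trans ih.1 (comb_step hstep), comb_trans (comb_step (step_symm hstep)) ih.2⟩

section chains
variable {V : Type} [DecidableEq V] {n : ℕ} {σ : Fin n → Finset V}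

lemma eval_chain (hinj : Function.Injective σ) (x : Fin n → ZMod 2) (r : Fin n) :
    (∑ i : Fin n, Finsupp.single (σ i) (x i)) (σ r) = x r := by
  rw [Finsupp.finset_sum_apply]
  rw [show (∑ i : Fin n, (Finsupp.single (σ i) (x i)) (σ r)) =
      ∑ i : Fin n, if i = r then x i else 0 from
    Finset.sum_congr rfl fun i _ => by simp [Finsupp.single_apply, hinj.eq_iff]]
  simp [Finset.sum_ite_eq']

lemma eval_empty (hne : ∀ i, (σ i).Nonempty) (x : Fin n → ZMod 2) :
    (∑ i : Fin n, Finsupp.single (σ i) (x i)) (∅ : Finset V) = 0 := by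
  rw [Finsupp.finset_sum_apply]
  refine Finset.sum_eq_zero fun i _ => ?_
  rw [Finsupp.single_apply, if_neg]
  exact fun h => Finset.nonempty_iff_ne_empty.1 (hne i) h

lemma chainOf_comb {A B : Matrix (Fin n) (Fin n) (ZMod 2)} {a : Fin n → ZMod 2} {j : Fin n}
    (h : ∀ r, B r j = ∑ k, A r k * a k) :
    chainOf σ B j = ∑ k, a k • chainOf σ A k := by
  unfold chainOf
  simp_rw [h]
  have step1 : ∀ i : Fin n, Finsupp.single (σ i) (∑ k, A i k * a k)
      = ∑ k, a k • Finsupp.single (σ i) (A i k) := by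
    intro i
    ext t
    rw [Finsupp.finset_sum_apply]
    simp only [Finsupp.smul_apply, Finsupp.single_apply, smul_ite, smul_zero, smul_eq_mul]
    by_cases ht : σ i = t
    · simp [ht, mul_comm, Finset.mul_sum]
    · simp [ht]
  simp_rw [step1]
  rw [Finset.sum_comm]
  exact Finset.sum_congr rfl fun k _ => (Finset.smul_sum).symm

lemma bmat_col (hinj : Function.Injective σ) (hne : ∀ i, (σ i).Nonempty)
    (hfilt : ∀ j : Fin n, ∀ t ⊆ σ j, t.Nonempty → ∃ i ≤ j, σ i = t) (k : Fin n) :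
    chainOf σ (bmat σ) k
      = bnd V (Finsupp.single (σ k) 1)
        + (if (σ k).card = 1 then Finsupp.single (∅ : Finset V) 1 else 0) := by
  rw [bnd_single, one_smul]
  by_cases h1 : (σ k).card = 1
  · obtain ⟨v, hv⟩ := Finset.card_eq_one.1 h1
    rw [if_pos h1, hv, Finset.sum_singleton, Finset.erase_singleton]
    have hz : chainOf σ (bmat σ) k = 0 := by
      unfold chainOf
      refine Finset.sum_eq_zero fun i _ => ?_
      have hb : bmat σ i k = 0 := by
        unfold bmat
        rw [if_neg]
        rintro ⟨hsub, hcard⟩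
        rw [h1] at hcard
        have h0 : (σ i).card = 0 := by omega
        exact absurd (Finset.card_eq_zero.1 h0) (Finset.nonempty_iff_ne_empty.1 (hne i))
      rw [hb, Finsupp.single_zero]
    rw [hz, addself]
  · rw [if_neg h1, add_zero]
    have h2 : 2 ≤ (σ k).card := by
      have := Finset.card_pos.2 (hne k)
      omega
    have hface : ∀ v ∈ σ k, ∃ i : Fin n, σ i = (σ k).erase v := by
      intro v hv
      obtain ⟨i, -, hi⟩ := hfilt k ((σ k).erase v) (Finset.erase_subset v (σ k))
        (Finset.card_pos.1 (by rw [Finset.card_erase_of_mem hv]; omega))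
      exact ⟨i, hi⟩
    choose φ hφ using hface
    have hLHS : chainOf σ (bmat σ) k
        = ∑ i ∈ Finset.univ.filter (fun i => σ i ⊆ σ k ∧ (σ i).card + 1 = (σ k).card),
            Finsupp.single (σ i) (1 : ZMod 2) := by
      unfold chainOf bmat
      rw [Finset.sum_filter]
      refine Finset.sum_congr rfl fun i _ => ?_
      by_cases hP : σ i ⊆ σ k ∧ (σ i).card + 1 = (σ k).card
      · rw [if_pos hP, if_pos hP]
      · rw [if_neg hP, if_neg hP, Finsupp.single_zero]
    rw [hLHS]
    refine (Finset.sum_bij (fun v hv => φ v hv) ?_ ?_ ?_ ?_).symm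
    · intro v hv
      rw [Finset.mem_filter, hφ v hv]
      refine ⟨Finset.mem_univ _, Finset.erase_subset v (σ k), ?_⟩
      rw [Finset.card_erase_of_mem hv]
      omega
    · intro v hv w hw heq
      have heq' : φ v hv = φ w hw := heq
      have : (σ k).erase v = (σ k).erase w := by
        rw [← hφ v hv, ← hφ w hw, heq']
      exact (Finset.erase_inj (σ k) hv).1 this
    · intro i hi
      rw [Finset.mem_filter] at hi
      obtain ⟨-, hsub, hcard⟩ := hi
      have hd : (σ k \ σ i).Nonempty := by
        rw [← Finset.card_pos, Finset.card_sdiff_of_subset hsub]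
        omega
      obtain ⟨v, hv⟩ := hd
      rw [Finset.mem_sdiff] at hv
      have hsube : σ i ⊆ (σ k).erase v := Finset.subset_erase.2 ⟨hsub, hv.2⟩
      have heq : σ i = (σ k).erase v := by
        refine Finset.eq_of_subset_of_card_le hsube ?_
        rw [Finset.card_erase_of_mem hv.1]
        omega
      refine ⟨v, hv.1, hinj ?_⟩
      rw [hφ v hv.1, heq]
    · intro v hv
      rw [hφ v hv]

end chains

lemma exists_isLow {n : ℕ} (R : Matrix (Fin n) (Fin n) (ZMod 2)) (l : Fin n)
    (h : ∃ r, R r l ≠ 0) : ∃ il, IsLow R il l := by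
  classical
  obtain ⟨r0, hr0⟩ := h
  set T := Finset.univ.filter (fun r => R r l ≠ 0) with hT
  have hTne : T.Nonempty := ⟨r0, by simp [hT, hr0]⟩
  exact ⟨T.max' hTne, (Finset.mem_filter.1 (T.max'_mem hTne)).2,
    fun r hr => Finset.le_max' T r (by simp [hT, hr])⟩

/-- if (i, j) is a persistence pair of a reduced form `R` of the
boundary matrix (i.e. `i = low(R_j)`), then the chain represented by column
`R_j` is a cycle in `K_i` which is not a boundary in `K_{j-1}` but becomes a
boundary in `K_j`: its homology class is born at index i and dies at index j. -/
theorem pair_cycle_born_and_dies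
    {V : Type} [DecidableEq V] {n : ℕ} (σ : Fin n → Finset V)
    (hinj : Function.Injective σ)
    (hne : ∀ i, (σ i).Nonempty)
    (hfilt : ∀ j : Fin n, ∀ t ⊆ σ j, t.Nonempty → ∃ i ≤ j, σ i = t)
    (R : Matrix (Fin n) (Fin n) (ZMod 2))
    (hred : Reduces (bmat σ) R) (hR : Reduced R)
    (i j : Fin n) (hlow : IsLow R i j) :
    chainOf σ R j ∈ cyclesOn {s | ∃ i' : Fin n, i' ≤ i ∧ σ i' = s} ∧
    chainOf σ R j ∉ boundariesOn {s | ∃ i' : Fin n, i' < j ∧ σ i' = s} ∧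
    chainOf σ R j ∈ boundariesOn {s | ∃ i' : Fin n, i' ≤ j ∧ σ i' = s} := by
  classical
  obtain ⟨hMR, hRM⟩ := reduces_comb hred
  obtain ⟨a, ha0, ha⟩ := hMR j
  have hch : chainOf σ R j = ∑ k, a k • chainOf σ (bmat σ) k := chainOf_comb ha
  set c : Finset V →₀ ZMod 2 := ∑ k, a k • Finsupp.single (σ k) (1 : ZMod 2) with hc
  set E : ZMod 2 := ∑ k, a k * (if (σ k).card = 1 then 1 else 0) with hEdef
  have hch2 : chainOf σ R j = bnd V c + E • Finsupp.single (∅ : Finset V) (1 : ZMod 2) := by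
    rw [hch, hc, map_sum, hEdef, Finset.sum_smul, ← Finset.sum_add_distrib]
    refine Finset.sum_congr rfl fun k _ => ?_
    rw [map_smul, bmat_col hinj hne hfilt k, smul_add]
    congr 1
    by_cases h : (σ k).card = 1 <;> simp [h, mul_smul]
  have hcmem : ∀ (S : Set (Finset V)), (∀ k : Fin n, a k ≠ 0 → σ k ∈ S) → c ∈ chainsOn S := by
    intro S hS
    refine Submodule.sum_mem _ fun k _ => ?_
    by_cases hak : a k = 0
    · rw [hak, zero_smul]; exact Submodule.zero_mem _
    · exact Submodule.smul_mem _ _ (Finsupp.single_mem_supported _ _ (hS k hak))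
  refine ⟨⟨?_, ?_⟩, ?_, ?_⟩
  · -- supported on K_i
    show chainOf σ R j ∈ Finsupp.supported (ZMod 2) (ZMod 2) _
    rw [Finsupp.mem_supported]
    intro s hs
    obtain ⟨k, -, hk⟩ := Finsupp.mem_support_finset_sum s hs
    rw [Finsupp.mem_support_single] at hk
    exact ⟨k, hlow.2 k hk.2, hk.1.symm⟩
  · -- cycle
    show chainOf σ R j ∈ LinearMap.ker (bnd V)
    rw [LinearMap.mem_ker, hch2, map_add, bnd_bnd, map_smul, bnd_single, zero_add]
    simp
  · -- not a boundary before j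
    intro hcon
    obtain ⟨d, hd, hbdd⟩ := hcon
    set b : Fin n → ZMod 2 := fun k => d (σ k) with hbdef
    have hb0 : ∀ k, b k ≠ 0 → k < j := by
      intro k hbk
      have hsupp : σ k ∈ d.support := Finsupp.mem_support_iff.2 hbk
      have := (Finsupp.mem_supported _ d).1 hd hsupp
      obtain ⟨i', hi', heq⟩ := this
      rwa [hinj heq] at hi'
    have hd_eq : d = ∑ k, Finsupp.single (σ k) (b k) := by
      ext s
      by_cases hex : ∃ k0 : Fin n, σ k0 = s
      · obtain ⟨k0, rfl⟩ := hex
        exact (eval_chain hinj (fun k => d (σ k)) k0).symm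
      · have hds : d s = 0 := by
          by_contra hne'
          obtain ⟨i', -, heq⟩ := (Finsupp.mem_supported _ d).1 hd (Finsupp.mem_support_iff.2 hne')
          exact hex ⟨i', heq⟩
        rw [hds, Finsupp.finset_sum_apply]
        refine (Finset.sum_eq_zero fun k _ => ?_).symm
        rw [Finsupp.single_apply, if_neg (fun h => hex ⟨k, h⟩)]
    -- bnd d as combination of bmat columns plus epsilon
    set E' : ZMod 2 := ∑ k, b k * (if (σ k).card = 1 then 1 else 0) with hE'def
    have hbndd : bnd V d = (∑ k, b k • chainOf σ (bmat σ) k)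
        + E' • Finsupp.single (∅ : Finset V) (1 : ZMod 2) := by
      rw [hd_eq, map_sum, hE'def, Finset.sum_smul, ← Finset.sum_add_distrib]
      refine Finset.sum_congr rfl fun k _ => ?_
      have h1 : Finsupp.single (σ k) (b k) = b k • Finsupp.single (σ k) (1 : ZMod 2) := by
        rw [Finsupp.smul_single', mul_one]
      have h2 : bnd V (Finsupp.single (σ k) (1 : ZMod 2))
          = chainOf σ (bmat σ) k
            + (if (σ k).card = 1 then Finsupp.single (∅ : Finset V) (1 : ZMod 2) else 0) :=
        cancel2 (bmat_col hinj hne hfilt k)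
      rw [h1, map_smul, h2, smul_add]
      congr 1
      by_cases h : (σ k).card = 1 <;> simp [h, mul_smul]
    -- matrix identity R r j = ∑ k bmat r k * b k
    have hcomb : ∀ r, R r j = ∑ k, bmat σ r k * b k := by
      intro r
      have heval := congrArg (fun f : Finset V →₀ ZMod 2 => f (σ r)) (hbdd.symm.trans hbndd)
      have hL : chainOf σ R j (σ r) = R r j := eval_chain hinj (fun k => R k j) r
      have hsum : (∑ k, b k • chainOf σ (bmat σ) k)
          = ∑ i' : Fin n, Finsupp.single (σ i') (∑ k, bmat σ i' k * b k) := by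
        have := chainOf_comb (σ := σ) (A := bmat σ)
          (B := fun r' _ => ∑ k, bmat σ r' k * b k) (a := b) (j := j) (fun r' => rfl)
        unfold chainOf at this
        exact this.symm
      rw [hL, hsum] at heval
      rw [heval, Finsupp.add_apply, eval_chain hinj (fun i' => ∑ k, bmat σ i' k * b k) r]
      rw [Finsupp.smul_apply, Finsupp.single_apply,
        if_neg (fun h => Finset.nonempty_iff_ne_empty.1 (hne r) h.symm), smul_zero, add_zero]
    -- express columns of bmat via columns of R
    choose t ht0 ht using hRM
    set c' : Fin n → ZMod 2 := fun l => ∑ k, t k l * b k with hc'def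
    have hc'0 : ∀ l, c' l ≠ 0 → l < j := by
      intro l hl
      by_contra hge
      refine hl (Finset.sum_eq_zero fun k _ => ?_)
      by_cases hbk : b k = 0
      · rw [hbk, mul_zero]
      · have hkj : k < j := hb0 k hbk
        rw [ht0 k l (lt_of_lt_of_le hkj (not_lt.1 hge)), zero_mul]
    have hRj : ∀ r, R r j = ∑ l, R r l * c' l := by
      intro r
      rw [hcomb r]
      have : ∀ k, bmat σ r k * b k = ∑ l, R r l * t k l * b k := by
        intro k; rw [ht k r, Finset.sum_mul]
      simp_rw [this]
      rw [Finset.sum_comm]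
      refine Finset.sum_congr rfl fun l _ => ?_
      rw [hc'def, Finset.mul_sum]
      refine Finset.sum_congr rfl fun k _ => ?_
      ring
    -- the low argument
    set Scols := Finset.univ.filter (fun l => c' l ≠ 0 ∧ ∃ r, R r l ≠ 0) with hScols
    set U := Finset.univ.filter (fun r => ∃ l ∈ Scols, IsLow R r l) with hU
    have hUne : U.Nonempty := by
      have hSne : Scols.Nonempty := by
        by_contra hemp
        rw [Finset.not_nonempty_iff_eq_empty] at hemp
        have : R i j = 0 := by
          rw [hRj i]
          refine Finset.sum_eq_zero fun l _ => ?_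
          by_cases h1 : c' l = 0
          · rw [h1, mul_zero]
          · by_cases h2 : ∃ r, R r l ≠ 0
            · exact absurd (hemp ▸ (Finset.mem_filter.2 ⟨Finset.mem_univ l, h1, h2⟩))
                (Finset.notMem_empty l)
            · push_neg at h2
              rw [h2 i, zero_mul]
        exact hlow.1 this
      obtain ⟨l0, hl0⟩ := hSne
      have hl0' := Finset.mem_filter.1 hl0
      obtain ⟨il, hil⟩ := exists_isLow R l0 hl0'.2.2
      exact ⟨il, Finset.mem_filter.2 ⟨Finset.mem_univ il, l0, hl0, hil⟩⟩
    set istar := U.max' hUne with histar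
    obtain ⟨-, lstar, hlstar, hlowstar⟩ := Finset.mem_filter.1 (U.max'_mem hUne)
    have hlstar' := Finset.mem_filter.1 hlstar
    -- all other columns in Scols vanish at row istar
    have hvanish : ∀ l ∈ Finset.univ, l ≠ lstar → R istar l * c' l = 0 := by
      intro l _ hne'
      by_cases h1 : c' l = 0
      · rw [h1, mul_zero]
      by_cases h2 : ∃ r, R r l ≠ 0
      · have hlS : l ∈ Scols := Finset.mem_filter.2 ⟨Finset.mem_univ l, h1, h2⟩
        obtain ⟨il, hil⟩ := exists_isLow R l h2
        have hilU : il ∈ U := Finset.mem_filter.2 ⟨Finset.mem_univ il, l, hlS, hil⟩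
        by_cases h3 : R istar l = 0
        · rw [h3, zero_mul]
        · have h4 : istar ≤ il := hil.2 istar h3
          have h5 : il ≤ istar := Finset.le_max' U il hilU
          have h6 : il = istar := le_antisymm h5 h4
          exact absurd (hR istar l lstar (h6 ▸ hil) hlowstar) hne'
      · push_neg at h2
        rw [h2 istar, zero_mul]
    have hRistarj : R istar j = R istar lstar * c' lstar := by
      rw [hRj istar]
      exact Finset.sum_eq_single_of_mem lstar (Finset.mem_univ lstar) hvanish
    have hRistarj_ne : R istar j ≠ 0 := by
      rw [hRistarj]
      exact mul_ne_zero hlowstar.1 hlstar'.2.1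
    have histar_le : istar ≤ i := hlow.2 istar hRistarj_ne
    -- i ≤ istar
    have hi_le : i ≤ istar := by
      have hne0 : (∑ l, R i l * c' l) ≠ 0 := by rw [← hRj i]; exact hlow.1
      obtain ⟨l, -, hl⟩ := Finset.exists_ne_zero_of_sum_ne_zero hne0
      have hRil : R i l ≠ 0 := fun h => hl (by rw [h, zero_mul])
      have hc'l : c' l ≠ 0 := fun h => hl (by rw [h, mul_zero])
      have hlS : l ∈ Scols := Finset.mem_filter.2 ⟨Finset.mem_univ l, hc'l, ⟨i, hRil⟩⟩
      obtain ⟨il, hil⟩ := exists_isLow R l ⟨i, hRil⟩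
      have hilU : il ∈ U := Finset.mem_filter.2 ⟨Finset.mem_univ il, l, hlS, hil⟩
      exact le_trans (hil.2 i hRil) (Finset.le_max' U il hilU)
    have : istar = i := le_antisymm histar_le hi_le
    subst this
    have : lstar = j := hR istar lstar j hlowstar hlow
    have hlt : lstar < j := hc'0 lstar hlstar'.2.1
    rw [this] at hlt
    exact lt_irrefl j hlt
  · -- boundary at j
    obtain ⟨v, hv⟩ := hne j
    obtain ⟨k0, hk0le, hk0⟩ := hfilt j {v} (Finset.singleton_subset_iff.2 hv)
      ⟨v, Finset.mem_singleton_self v⟩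
    have hbk0 : bnd V (Finsupp.single (σ k0) (1 : ZMod 2))
        = Finsupp.single (∅ : Finset V) 1 := by
      rw [bnd_single, one_smul, hk0, Finset.sum_singleton, Finset.erase_singleton]
    refine ⟨c + E • Finsupp.single (σ k0) 1, ?_, ?_⟩
    · refine Submodule.add_mem _ (hcmem _ fun k hak => ?_) (Submodule.smul_mem _ _ ?_)
      · refine ⟨k, ?_, rfl⟩
        by_contra hgt
        exact hak (ha0 k (not_le.1 hgt))
      · exact Finsupp.single_mem_supported _ _ ⟨k0, hk0le, rfl⟩
    · rw [map_add, map_smul, hbk0, hch2.symm]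
end

section
/- Clearing/killing correctness: if (i, j) is a persistence pair of a boundary matrix M, then in any reduced form R of M, column R_i is zero. Hence setting column i to zero as soon as i appears as a lowest one of a reduced column does not change the output of the reduction. -/
/-- (i, j) is a persistence pair of `M`. -/
def PersPair {n : ℕ} (M : Matrix (Fin n) (Fin n) (ZMod 2)) (i j : Fin n) : Prop :=
  ∃ R, Reduces M R ∧ Reduced R ∧ IsLow R i j

namespace Matrix

variable {m α : Type*} [LinearOrder m] [Semiring α]

theorem IsUpperTriangular.mulVec_apply_of_forall_lt [Fintype m] {U : Matrix m m α}
    (hU : U.IsUpperTriangular) {v : m → α} {i : m} (hv : ∀ k, i < k → v k = 0) :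
    (U *ᵥ v) i = U i i * v i := by
  refine Fintype.sum_eq_single i fun k hk => ?_
  rcases hk.lt_or_gt with hki | hik
  · exact mul_eq_zero_of_left (hU hki) _
  · exact mul_eq_zero_of_right _ (hv k hik)

def IsUpperUnitriangular (U : Matrix m m α) : Prop :=
  U.IsUpperTriangular ∧ ∀ k, U k k = 1

theorem isUpperUnitriangular_one [DecidableEq m] : (1 : Matrix m m α).IsUpperUnitriangular :=
  ⟨blockTriangular_one, one_apply_eq⟩

theorem isUpperUnitriangular_one_add_single [DecidableEq m] {i j : m} (hij : i < j) (a : α) :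
    (1 + single i j a).IsUpperUnitriangular := by
  refine ⟨blockTriangular_one.add fun r c hcr => ?_, fun k => ?_⟩
  · have : ¬(i = r ∧ j = c) := by rintro ⟨rfl, rfl⟩; exact (hij.trans hcr).false
    simp [this]
  · have : ¬(i = k ∧ j = k) := by rintro ⟨rfl, rfl⟩; exact hij.false
    simp [this]

theorem IsUpperUnitriangular.mul [Fintype m] {U V : Matrix m m α} (hU : U.IsUpperUnitriangular)
    (hV : V.IsUpperUnitriangular) : (U * V).IsUpperUnitriangular := by
  refine ⟨hU.1.mul hV.1, fun k => ?_⟩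
  have hcol := hU.1.mulVec_apply_of_forall_lt (v := fun l => V l k) (i := k) fun l hkl => hV.1 hkl
  change (U *ᵥ fun l => V l k) k = 1
  rw [hcol, hU.2, hV.2, one_mul]

end Matrix

open Matrix

section ColumnReduction

variable {n : ℕ}

theorem colAdd_eq_mul_one_add_single (M : Matrix (Fin n) (Fin n) (ZMod 2)) (i j : Fin n) :
    colAdd M i j = M * (1 + single i j 1) := by
  ext r c
  rw [mul_add, mul_one, Matrix.add_apply]
  by_cases hc : c = j
  · subst hc
    simp [colAdd]
  · simp [colAdd, hc]

theorem colAdd_colAdd (M : Matrix (Fin n) (Fin n) (ZMod 2)) {i j : Fin n} (hij : i ≠ j) :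
    colAdd (colAdd M i j) i j = M := by
  ext r c
  by_cases hc : c = j
  · subst hc
    simp [colAdd, hij, add_assoc, CharTwo.add_self_eq_zero]
  · simp [colAdd, hc]

theorem Step.symm {M N : Matrix (Fin n) (Fin n) (ZMod 2)} (h : Step M N) : Step N M := by
  obtain ⟨i, j, hij, rfl⟩ := h
  exact ⟨i, j, hij, (colAdd_colAdd M hij.ne).symm⟩

theorem Reduces.symm {M R : Matrix (Fin n) (Fin n) (ZMod 2)} (h : Reduces M R) : Reduces R M :=
  have : Std.Symm (@Step n) := ⟨fun _ _ => Step.symm⟩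
  Std.Symm.symm (r := Relation.ReflTransGen Step) _ _ h

theorem Reduces.exists_eq_mul_isUpperUnitriangular {M R : Matrix (Fin n) (Fin n) (ZMod 2)}
    (h : Reduces M R) :
    ∃ U : Matrix (Fin n) (Fin n) (ZMod 2), U.IsUpperUnitriangular ∧ R = M * U := by
  induction h with
  | refl => exact ⟨1, isUpperUnitriangular_one, (mul_one M).symm⟩
  | tail _ hstep ih =>
    obtain ⟨U, hU, rfl⟩ := ih
    obtain ⟨i, j, hij, rfl⟩ := hstep
    exact ⟨U * (1 + single i j 1), hU.mul (isUpperUnitriangular_one_add_single hij 1),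
      by rw [colAdd_eq_mul_one_add_single, Matrix.mul_assoc]⟩

end ColumnReduction

section Reduced

variable {n : ℕ} {R : Matrix (Fin n) (Fin n) (ZMod 2)}

theorem IsLow.eq_zero_of_lt {i j k : Fin n} (h : IsLow R i j) (hik : i < k) : R k j = 0 := by
  by_contra hk
  exact (h.2 k hk).not_gt hik

theorem exists_isLow_of_ne_zero {r c : Fin n} (h : R r c ≠ 0) : ∃ l, IsLow R l c := by
  let rows := Finset.univ.filter fun r' => R r' c ≠ 0
  have hrows : rows.Nonempty := ⟨r, Finset.mem_filter.2 ⟨Finset.mem_univ r, h⟩⟩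
  exact ⟨rows.max' hrows, (Finset.mem_filter.1 (rows.max'_mem hrows)).2,
    fun r' hr' => rows.le_max' r' (Finset.mem_filter.2 ⟨Finset.mem_univ r', hr'⟩)⟩

/-- In a relation among the nonzero columns, the column with the largest lowest one is the only
one with a nonzero entry in that row. -/
theorem Reduced.eq_zero_of_mulVec_eq_zero (hR : Reduced R) {w : Fin n → ZMod 2}
    (hw : R *ᵥ w = 0) {c : Fin n} (hc : w c ≠ 0) (r : Fin n) : R r c = 0 := by
  classical
  by_contra hrc
  let lows := Finset.univ.filter fun l => ∃ c', w c' ≠ 0 ∧ IsLow R l c'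
  have hlows : lows.Nonempty := by
    obtain ⟨l, hl⟩ := exists_isLow_of_ne_zero hrc
    exact ⟨l, Finset.mem_filter.2 ⟨Finset.mem_univ l, c, hc, hl⟩⟩
  obtain ⟨c₀, hwc₀, hlow₀⟩ := (Finset.mem_filter.1 (lows.max'_mem hlows)).2
  set l₀ := lows.max' hlows
  have hsingle : (R *ᵥ w) l₀ = R l₀ c₀ * w c₀ := by
    refine Fintype.sum_eq_single c₀ fun c' hc' => ?_
    by_contra hne
    obtain ⟨hRc', hwc'⟩ := mul_ne_zero_iff.1 hne
    obtain ⟨l, hl⟩ := exists_isLow_of_ne_zero hRc'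
    have hl₀ : l₀ = l := le_antisymm (hl.2 l₀ hRc')
      (lows.le_max' l (Finset.mem_filter.2 ⟨Finset.mem_univ l, c', hwc', hl⟩))
    exact hc' (hR l₀ c' c₀ (hl₀ ▸ hl) hlow₀)
  rw [hw] at hsingle
  exact mul_ne_zero hlow₀.1 hwc₀ hsingle.symm

end Reduced

section Boundary

open Finset

variable {V : Type} [DecidableEq V] {n : ℕ} {σ : Fin n → Finset V}

/-- The simplices strictly between `σ r` and a simplex `σ c` two dimensions higher are the
`insert x (σ r)` for the two vertices `x ∈ σ c \ σ r`. -/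
theorem card_filter_faces_between (hinj : Function.Injective σ)
    (hfilt : ∀ j : Fin n, ∀ t ⊆ σ j, t.Nonempty → ∃ i ≤ j, σ i = t) {r c : Fin n}
    (hrc : σ r ⊆ σ c) (hcard : #(σ r) + 2 = #(σ c)) :
    #{k | (σ r ⊆ σ k ∧ #(σ r) + 1 = #(σ k)) ∧ (σ k ⊆ σ c ∧ #(σ k) + 1 = #(σ c))} = 2 := by
  set S := ({k | (σ r ⊆ σ k ∧ #(σ r) + 1 = #(σ k)) ∧ (σ k ⊆ σ c ∧ #(σ k) + 1 = #(σ c))} :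
    Finset (Fin n))
  have himage : S.image σ = (σ c \ σ r).image (insert · (σ r)) := by
    ext u
    simp only [S, mem_image, mem_filter, mem_univ, true_and, mem_sdiff]
    constructor
    · rintro ⟨k, ⟨⟨hrk, hcard_rk⟩, hkc, -⟩, rfl⟩
      obtain ⟨x, hxr, hxk⟩ := exists_eq_insert_iff.2 ⟨hrk, hcard_rk⟩
      exact ⟨x, ⟨hkc (hxk ▸ mem_insert_self x _), hxr⟩, hxk⟩
    · rintro ⟨x, ⟨hxc, hxr⟩, rfl⟩
      obtain ⟨k, -, hk⟩ := hfilt c _ (insert_subset hxc hrc) (insert_nonempty _ _)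
      have hcard_k : #(σ k) = #(σ r) + 1 := hk ▸ card_insert_of_notMem hxr
      exact ⟨k, ⟨⟨hk ▸ subset_insert _ _, by omega⟩, hk ▸ insert_subset hxc hrc, by omega⟩, hk⟩
  rw [← card_image_of_injective S hinj, himage,
    card_image_of_injOn ((insert_inj_on _).mono fun x hx => (mem_sdiff.1 hx).2),
    card_sdiff_of_subset hrc]
  omega

theorem bmat_mul_bmat (hinj : Function.Injective σ)
    (hfilt : ∀ j : Fin n, ∀ t ⊆ σ j, t.Nonempty → ∃ i ≤ j, σ i = t) :
    bmat σ * bmat σ = 0 := by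
  ext r c
  simp only [mul_apply, bmat, ite_zero_mul_ite_zero, one_mul, sum_boole, Matrix.zero_apply]
  rcases eq_empty_or_nonempty
    ({k | (σ r ⊆ σ k ∧ #(σ r) + 1 = #(σ k)) ∧ (σ k ⊆ σ c ∧ #(σ k) + 1 = #(σ c))} :
      Finset (Fin n)) with hempty | ⟨k, hk⟩
  · rw [hempty, card_empty, Nat.cast_zero]
  · obtain ⟨⟨hrk, hcard_rk⟩, hkc, hcard_kc⟩ := (mem_filter.1 hk).2
    rw [card_filter_faces_between hinj hfilt (hrk.trans hkc) (by omega)]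
    rfl

end Boundary

theorem clearing_correct_general
    {V : Type} [DecidableEq V] {n : ℕ} (σ : Fin n → Finset V)
    (hinj : Function.Injective σ)
    (hfilt : ∀ j : Fin n, ∀ t ⊆ σ j, t.Nonempty → ∃ i ≤ j, σ i = t)
    (i j : Fin n) (hpair : PersPair (bmat σ) i j)
    (R' : Matrix (Fin n) (Fin n) (ZMod 2))
    (hred : Reduces (bmat σ) R') (hR' : Reduced R') :
    ∀ r, R' r i = 0 := by
  obtain ⟨R, hR, -, hlow⟩ := hpair
  obtain ⟨U, -, rfl⟩ := hR.exists_eq_mul_isUpperUnitriangular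
  obtain ⟨W, hW, hR'W⟩ := hred.symm.exists_eq_mul_isUpperUnitriangular
  set v := (bmat σ * U) *ᵥ Pi.single j 1
  refine hR'.eq_zero_of_mulVec_eq_zero (w := W *ᵥ v) ?_ ?_
  · rw [mulVec_mulVec, ← hR'W, mulVec_mulVec, ← Matrix.mul_assoc, bmat_mul_bmat hinj hfilt,
      Matrix.zero_mul, zero_mulVec]
  · rw [hW.1.mulVec_apply_of_forall_lt fun k hik => by simpa [v] using hlow.eq_zero_of_lt hik,
      hW.2, one_mul]
    simpa [v] using hlow.1

/-- clearing/killing correctness.  If (i, j) is a persistence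
pair of the boundary matrix `M` of a simplicial filtration, then in any reduced
form `R'` of `M` the column `i` is zero.  Hence setting column `i` to zero as
soon as `i` appears as a lowest one does not change the output of the
reduction. -/
theorem clearing_correct
    {V : Type} [DecidableEq V] {n : ℕ} (σ : Fin n → Finset V)
    (hinj : Function.Injective σ)
    (hne : ∀ i, (σ i).Nonempty)
    (hfilt : ∀ j : Fin n, ∀ t ⊆ σ j, t.Nonempty → ∃ i ≤ j, σ i = t)
    (i j : Fin n) (hpair : PersPair (bmat σ) i j)
    (R' : Matrix (Fin n) (Fin n) (ZMod 2))
    (hred : Reduces (bmat σ) R') (hR' : Reduced R') :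
    ∀ r, R' r i = 0 :=
  clearing_correct_general σ hinj hfilt i j hpair R' hred hR'
end

section
/- Columns of a boundary matrix that reduce to zero do not affect the reduction of other columns: if R is a reduced form of M and Z is the set of columns j with R_j = 0, then the reduced form of the matrix M' obtained by zeroing out the columns in Z of M has the same nonzero columns as R. -/
/-!
Over `ℤ/2`, `M` reduces to `R` by left-to-right column additions exactly when every column
`R_j - M_j` lies in the span of the columns of `M` to the left of `j`. If `R_j = 0`, then `M_j`
itself lies in that span, so by induction on `j` the columns of `M` left of `j` lie in the span of
the columns of `M'` left of `j`: the zeroed-out columns are never needed.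
-/

open Matrix Set Submodule

variable {n : ℕ}

def leftColSpan (M : Matrix (Fin n) (Fin n) (ZMod 2)) (j : Fin n) :
    Submodule (ZMod 2) (Fin n → ZMod 2) :=
  span (ZMod 2) (Mᵀ '' Iio j)

lemma leftColSpan_mono (M : Matrix (Fin n) (Fin n) (ZMod 2)) {i j : Fin n} (h : i ≤ j) :
    leftColSpan M i ≤ leftColSpan M j :=
  span_mono (image_mono (Iio_subset_Iio h))

lemma col_mem_leftColSpan (M : Matrix (Fin n) (Fin n) (ZMod 2)) {i j : Fin n} (h : i < j) :
    Mᵀ i ∈ leftColSpan M j :=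
  subset_span (mem_image_of_mem _ h)

lemma leftColSpan_congr {M N : Matrix (Fin n) (Fin n) (ZMod 2)} {j : Fin n}
    (h : ∀ k < j, Nᵀ k = Mᵀ k) : leftColSpan N j = leftColSpan M j := by
  unfold leftColSpan
  congr 1
  exact image_congr h

lemma colAdd_eq_updateCol (M : Matrix (Fin n) (Fin n) (ZMod 2)) (i j : Fin n) :
    colAdd M i j = M.updateCol j (Mᵀ j + Mᵀ i) := by
  ext r c
  simp [colAdd, updateCol_apply]

lemma transpose_colAdd_self (M : Matrix (Fin n) (Fin n) (ZMod 2)) (i j : Fin n) :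
    (colAdd M i j)ᵀ j = Mᵀ j + Mᵀ i := by
  ext r
  simp [colAdd]

lemma transpose_colAdd_of_ne (M : Matrix (Fin n) (Fin n) (ZMod 2)) (i : Fin n) {j k : Fin n}
    (h : k ≠ j) : (colAdd M i j)ᵀ k = Mᵀ k := by
  ext r
  simp [colAdd, h]

lemma transpose_updateCol_self (M : Matrix (Fin n) (Fin n) (ZMod 2)) (j : Fin n)
    (c : Fin n → ZMod 2) : (M.updateCol j c)ᵀ j = c := by
  ext r
  simp

lemma updateCol_transpose_self (M : Matrix (Fin n) (Fin n) (ZMod 2)) (j : Fin n) :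
    M.updateCol j (Mᵀ j) = M :=
  updateCol_eq_self M j

lemma reduces_updateCol_add {M : Matrix (Fin n) (Fin n) (ZMod 2)} {j : Fin n}
    {v : Fin n → ZMod 2} (hv : v ∈ leftColSpan M j) :
    Reduces M (M.updateCol j (Mᵀ j + v)) := by
  suffices ∀ N : Matrix (Fin n) (Fin n) (ZMod 2), (∀ k < j, Nᵀ k = Mᵀ k) →
      Reduces N (N.updateCol j (Nᵀ j + v)) from this M fun _ _ => rfl
  induction hv using span_induction with
  | mem x hx =>
    obtain ⟨k, hk, rfl⟩ := hx
    intro N hN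
    rw [← hN k hk, ← colAdd_eq_updateCol]
    exact .single ⟨k, j, hk, rfl⟩
  | zero =>
    intro N _
    rw [add_zero, updateCol_transpose_self]
    exact .refl
  | add x y _ _ hx hy =>
    intro N hN
    have hbelow : ∀ k < j, (N.updateCol j (Nᵀ j + x))ᵀ k = Mᵀ k := fun k hk => by
      ext r
      simpa [updateCol_ne hk.ne] using congrFun (hN k hk) r
    have := hy _ hbelow
    rw [transpose_updateCol_self, updateCol_idem, add_assoc] at this
    exact (hx N hN).trans this
  | smul c x _ hx =>
    intro N hN
    obtain rfl | rfl : c = 0 ∨ c = 1 := by decide +revert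
    · rw [zero_smul, add_zero, updateCol_transpose_self]
      exact .refl
    · rw [one_smul]
      exact hx N hN

theorem Reduces.sub_mem_leftColSpan {M R : Matrix (Fin n) (Fin n) (ZMod 2)}
    (h : Reduces M R) (j : Fin n) : Rᵀ j - Mᵀ j ∈ leftColSpan M j := by
  induction h generalizing j with
  | refl => simp
  | @tail R _ _ hstep ih =>
    obtain ⟨i, j', hij, rfl⟩ := hstep
    by_cases hj : j = j'
    · subst hj
      have hRi : Rᵀ i ∈ leftColSpan M j :=
        sub_add_cancel (Rᵀ i) (Mᵀ i) ▸
          add_mem (leftColSpan_mono M hij.le (ih i)) (col_mem_leftColSpan M hij)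
      rw [transpose_colAdd_self, add_sub_right_comm]
      exact add_mem (ih j) hRi
    · rw [transpose_colAdd_of_ne R i hj]
      exact ih j

theorem reduces_of_forall_sub_mem_leftColSpan {M R : Matrix (Fin n) (Fin n) (ZMod 2)}
    (h : ∀ j, Rᵀ j - Mᵀ j ∈ leftColSpan M j) : Reduces M R := by
  -- Columns are rewritten from right to left, so the columns added are still those of `M`.
  let N : ℕ → Matrix (Fin n) (Fin n) (ZMod 2) := fun m r c => if m ≤ c then R r c else M r c
  have hN_zero : N 0 = R := by
    ext r c
    exact if_pos (Nat.zero_le _)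
  have hN_of_le : ∀ m, n ≤ m → N m = M := fun m hm => by
    ext r c
    exact if_neg (by omega)
  have hstep : ∀ m, Reduces (N (m + 1)) (N m) := by
    intro m
    by_cases hm : m < n
    · set j : Fin n := ⟨m, hm⟩
      have hbelow : ∀ k < j, (N (m + 1))ᵀ k = Mᵀ k := fun k hk => by
        have hk' : (k : ℕ) < m := hk
        ext r
        exact if_neg (by omega)
      have hN_succ : N m = (N (m + 1)).updateCol j ((N (m + 1))ᵀ j + (Rᵀ j - Mᵀ j)) := by
        ext r c
        rw [updateCol_apply]
        split_ifs with hc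
        · rw [hc]
          show (if m ≤ m then R r j else M r j) =
            (if m + 1 ≤ m then R r j else M r j) + (R r j - M r j)
          simp
        · have hc' : (c : ℕ) ≠ m := fun h' => hc (Fin.ext h')
          exact if_congr (by omega) rfl rfl
      rw [hN_succ]
      exact reduces_updateCol_add (leftColSpan_congr hbelow ▸ h j)
    · rw [hN_of_le m (by omega), hN_of_le (m + 1) (by omega)]
      exact .refl
  have hN : ∀ m, Reduces (N m) R := by
    intro m
    induction m with
    | zero => exact hN_zero ▸ .refl
    | succ m ih => exact (hstep m).trans ih
  exact hN_of_le n le_rfl ▸ hN n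

lemma leftColSpan_le_of_forall_col {M M' : Matrix (Fin n) (Fin n) (ZMod 2)}
    (h : ∀ k, Mᵀ k ∈ leftColSpan M k ∨ Mᵀ k = M'ᵀ k) (j : Fin n) :
    leftColSpan M j ≤ leftColSpan M' j := by
  induction j using WellFoundedLT.induction with
  | _ j ih =>
    refine span_le.2 ?_
    rintro _ ⟨k, hk, rfl⟩
    rcases h k with hmem | heq
    · exact leftColSpan_mono M' hk.le (ih k hk hmem)
    · exact heq ▸ col_mem_leftColSpan M' hk

theorem zero_columns_do_not_affect_general
    {n : ℕ} (M R : Matrix (Fin n) (Fin n) (ZMod 2))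
    (hred : Reduces M R)
    (Z : Set (Fin n)) (hZ : Z = {j : Fin n | ∀ r, R r j = 0})
    (M' : Matrix (Fin n) (Fin n) (ZMod 2))
    (hM'z : ∀ r c, c ∈ Z → M' r c = 0)
    (hM'n : ∀ r c, c ∉ Z → M' r c = M r c) :
    Reduces M' R := by
  have hM'col : ∀ k ∉ Z, M'ᵀ k = Mᵀ k := fun k hk => funext fun r => hM'n r k hk
  have hRcol : ∀ k ∈ Z, Rᵀ k = 0 := fun k hk => funext (by rw [hZ] at hk; exact hk)
  have hspan : ∀ j, leftColSpan M j ≤ leftColSpan M' j :=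
    leftColSpan_le_of_forall_col fun k => by
      by_cases hk : k ∈ Z
      · left
        simpa [hRcol k hk] using hred.sub_mem_leftColSpan k
      · exact .inr (hM'col k hk).symm
  refine reduces_of_forall_sub_mem_leftColSpan fun j => ?_
  by_cases hj : j ∈ Z
  · have hM'j : M'ᵀ j = 0 := funext fun r => hM'z r j hj
    simp [hRcol j hj, hM'j]
  · rw [hM'col j hj]
    exact hspan j (hred.sub_mem_leftColSpan j)

/-- columns that reduce to zero do not affect the reduction of
other columns.  If `R` is a reduced form of `M` and `Z` is the set of column
indices with `R_j = 0`, then the matrix `M'` obtained by zeroing out the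
columns of `M` in `Z` also reduces (by left-to-right column additions) to `R`;
in particular its reduced form has the same nonzero columns as `R`. -/
theorem zero_columns_do_not_affect
    {n : ℕ} (M R : Matrix (Fin n) (Fin n) (ZMod 2))
    (hred : Reduces M R) (hR : Reduced R)
    (Z : Set (Fin n)) (hZ : Z = {j : Fin n | ∀ r, R r j = 0})
    (M' : Matrix (Fin n) (Fin n) (ZMod 2))
    (hM'z : ∀ r c, c ∈ Z → M' r c = 0)
    (hM'n : ∀ r c, c ∉ Z → M' r c = M r c) :
    Reduces M' R :=
  zero_columns_do_not_affect_general M R hred Z hZ M' hM'z hM'n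
end

section
/- For a filtration, the number of positive k-simplices among σ_1,...,σ_m equals dim Z_k(K_m) (the dimension of the k-cycle space of K_m), and the number of negative (k+1)-simplices among σ_1,...,σ_m equals dim B_k(K_m) (the dimension of the k-boundary space). -/
/-- The set of simplices of the complex `K_m` (first `m` simplices of the
filtration `σ`) having `d` vertices (degree `d − 1` simplices). -/
def skel {V : Type} [DecidableEq V] {n : ℕ} (σ : Fin n → Finset V) (m d : ℕ) :
    Set (Finset V) :=
  {s | (∃ i : Fin n, i.val < m ∧ σ i = s) ∧ s.card = d}

/-- `σ i` is a positive simplex: adding it increases the dimension of the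
cycle space of its own degree. -/
noncomputable def Positive {V : Type} [DecidableEq V] {n : ℕ}
    (σ : Fin n → Finset V) (i : Fin n) : Prop :=
  Module.finrank (ZMod 2) (cyclesOn (skel σ (i.val + 1) (σ i).card))
    = Module.finrank (ZMod 2) (cyclesOn (skel σ i.val (σ i).card)) + 1

section Aux
set_option synthInstance.maxHeartbeats 1000000
set_option maxHeartbeats 1000000
open Module Submodule

variable {V : Type} [DecidableEq V]

lemma chainsOn_mono {S T : Set (Finset V)} (h : S ⊆ T) : chainsOn S ≤ chainsOn T :=
  Finsupp.supported_mono h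

lemma chainsOn_fd {S : Set (Finset V)} (hS : S.Finite) :
    FiniteDimensional (ZMod 2) (chainsOn S) := by
  haveI := hS.fintype
  exact Module.Finite.equiv (Finsupp.supportedEquivFinsupp (M := ZMod 2) (R := ZMod 2) S).symm

lemma chainsOn_finrank {S : Set (Finset V)} (hS : S.Finite) :
    finrank (ZMod 2) (chainsOn S) = S.ncard := by
  haveI := hS.fintype
  rw [show chainsOn S = Finsupp.supported (ZMod 2) (ZMod 2) S from rfl,
    LinearEquiv.finrank_eq (Finsupp.supportedEquivFinsupp (M := ZMod 2) (R := ZMod 2) S),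
    LinearEquiv.finrank_eq (Finsupp.linearEquivFunOnFinite (ZMod 2) (ZMod 2) S),
    Module.finrank_fintype_fun_eq_card, Set.ncard_eq_toFinset_card', Set.toFinset_card]

lemma cyclesOn_fd {S : Set (Finset V)} (hS : S.Finite) :
    FiniteDimensional (ZMod 2) (cyclesOn S) := by
  haveI := chainsOn_fd hS
  exact Submodule.finiteDimensional_of_le inf_le_left

lemma chains_rank_eq {S : Set (Finset V)} (hS : S.Finite) :
    finrank (ZMod 2) (chainsOn S)
      = finrank (ZMod 2) (cyclesOn S) + finrank (ZMod 2) (boundariesOn S) := by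
  haveI := chainsOn_fd hS
  have h := LinearMap.finrank_range_add_finrank_ker (K := ZMod 2) (V := chainsOn S)
    ((bnd V).domRestrict (chainsOn S))
  rw [LinearMap.range_domRestrict] at h
  have hmap : Submodule.map (chainsOn S).subtype
      (LinearMap.ker ((bnd V).domRestrict (chainsOn S))) = cyclesOn S := by
    ext x
    simp only [Submodule.mem_map, LinearMap.mem_ker, LinearMap.domRestrict_apply,
      cyclesOn, Submodule.mem_inf, Submodule.coe_subtype, Subtype.exists]
    constructor
    · rintro ⟨a, ha, hk, rfl⟩; exact ⟨ha, hk⟩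
    · rintro ⟨ha, hk⟩; exact ⟨x, ha, hk, rfl⟩
  have h2 := Submodule.finrank_map_subtype_eq (chainsOn S)
    (LinearMap.ker ((bnd V).domRestrict (chainsOn S)))
  rw [hmap] at h2
  rw [← h2] at h
  rw [show boundariesOn S = Submodule.map (bnd V) (chainsOn S) from rfl]
  omega

lemma cyclesOn_finrank_mono {S T : Set (Finset V)} (hT : T.Finite) (h : S ⊆ T) :
    finrank (ZMod 2) (cyclesOn S) ≤ finrank (ZMod 2) (cyclesOn T) := by
  haveI := chainsOn_fd hT
  haveI : Module.Finite (ZMod 2) (cyclesOn T) :=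
    Submodule.finiteDimensional_of_le inf_le_left
  exact Submodule.finrank_mono (inf_le_inf_right _ (chainsOn_mono h))

lemma cyclesOn_insert_le {S : Set (Finset V)} (hS : S.Finite) (a : Finset V) :
    finrank (ZMod 2) (cyclesOn (insert a S)) ≤ finrank (ZMod 2) (cyclesOn S) + 1 := by
  haveI h1 := chainsOn_fd (hS.insert a)
  haveI h2 := chainsOn_fd hS
  haveI : FiniteDimensional (ZMod 2) (cyclesOn (insert a S)) :=
    Submodule.finiteDimensional_of_le inf_le_left
  haveI : FiniteDimensional (ZMod 2) (cyclesOn S) := cyclesOn_fd hS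
  have hinf : cyclesOn (insert a S) ⊓ chainsOn S = cyclesOn S := by
    rw [show cyclesOn (insert a S) = chainsOn (insert a S) ⊓ LinearMap.ker (bnd V) from rfl,
      inf_right_comm,
      inf_eq_right.mpr (chainsOn_mono (Set.subset_insert a S)),
      show chainsOn S ⊓ LinearMap.ker (bnd V) = cyclesOn S from rfl]
  have key := Submodule.finrank_sup_add_finrank_inf_eq
    (cyclesOn (insert a S)) (chainsOn S)
  rw [hinf] at key
  have hsup : finrank (ZMod 2) ↥(cyclesOn (insert a S) ⊔ chainsOn S)
      ≤ finrank (ZMod 2) (chainsOn (insert a S)) :=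
    Submodule.finrank_mono (sup_le inf_le_left (chainsOn_mono (Set.subset_insert a S)))
  have hcard : finrank (ZMod 2) (chainsOn (insert a S))
      ≤ finrank (ZMod 2) (chainsOn S) + 1 := by
    rw [chainsOn_finrank (hS.insert a), chainsOn_finrank hS]
    exact (Set.ncard_insert_le a S).trans (by omega)
  omega

variable {n : ℕ}

lemma skel_eq_image (σ : Fin n → Finset V) (m d : ℕ) :
    skel σ m d = σ '' {i : Fin n | i.val < m ∧ (σ i).card = d} := by
  ext s
  constructor
  · rintro ⟨⟨i, him, rfl⟩, hcard⟩; exact ⟨i, ⟨him, hcard⟩, rfl⟩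
  · rintro ⟨i, ⟨him, hcard⟩, rfl⟩; exact ⟨⟨i, him, rfl⟩, hcard⟩

lemma skel_finite (σ : Fin n → Finset V) (m d : ℕ) : (skel σ m d).Finite := by
  rw [skel_eq_image]; exact (Set.toFinite _).image σ

lemma skel_ncard (σ : Fin n → Finset V) (hinj : Function.Injective σ) (m d : ℕ) :
    (skel σ m d).ncard = {i : Fin n | i.val < m ∧ (σ i).card = d}.ncard := by
  rw [skel_eq_image, Set.ncard_image_of_injective _ hinj]

lemma skel_succ_of_ne (σ : Fin n → Finset V) {m d : ℕ} (hm : m < n)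
    (hd : (σ ⟨m, hm⟩).card ≠ d) : skel σ (m + 1) d = skel σ m d := by
  ext s
  constructor
  · rintro ⟨⟨i, him, rfl⟩, hcard⟩
    rcases Nat.lt_succ_iff_lt_or_eq.mp him with h | h
    · exact ⟨⟨i, h, rfl⟩, hcard⟩
    · exact absurd hcard (by rwa [show i = ⟨m, hm⟩ from Fin.ext h])
  · rintro ⟨⟨i, him, rfl⟩, hcard⟩
    exact ⟨⟨i, Nat.lt_succ_of_lt him, rfl⟩, hcard⟩

lemma skel_succ_of_eq (σ : Fin n → Finset V) {m d : ℕ} (hm : m < n)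
    (hd : (σ ⟨m, hm⟩).card = d) :
    skel σ (m + 1) d = insert (σ ⟨m, hm⟩) (skel σ m d) := by
  ext s
  constructor
  · rintro ⟨⟨i, him, rfl⟩, hcard⟩
    rcases Nat.lt_succ_iff_lt_or_eq.mp him with h | h
    · exact Or.inr ⟨⟨i, h, rfl⟩, hcard⟩
    · exact Or.inl (by rw [show i = ⟨m, hm⟩ from Fin.ext h])
  · rintro (rfl | ⟨⟨i, him, rfl⟩, hcard⟩)
    · exact ⟨⟨⟨m, hm⟩, Nat.lt_succ_self m, rfl⟩, hd⟩
    · exact ⟨⟨i, Nat.lt_succ_of_lt him, rfl⟩, hcard⟩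

lemma notMem_skel (σ : Fin n → Finset V) (hinj : Function.Injective σ) {m : ℕ} (hm : m < n) :
    σ ⟨m, hm⟩ ∉ skel σ m (σ ⟨m, hm⟩).card := by
  rintro ⟨⟨i, him, hi⟩, -⟩
  have : i = ⟨m, hm⟩ := hinj hi
  subst this
  simp at him

lemma pos_count (σ : Fin n → Finset V) (hinj : Function.Injective σ) :
    ∀ m, m ≤ n → ∀ d,
      {i : Fin n | i.val < m ∧ (σ i).card = d ∧ Positive σ i}.ncard
        = finrank (ZMod 2) (cyclesOn (skel σ m d)) := by
  intro m
  induction m with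
  | zero =>
    intro _ d
    have h1 : {i : Fin n | i.val < 0 ∧ (σ i).card = d ∧ Positive σ i} = ∅ := by
      ext i; simp
    have h2 : skel σ 0 d = ∅ := by
      ext s; simp [skel]
    have h3 : cyclesOn (∅ : Set (Finset V)) = ⊥ := by
      rw [show cyclesOn (∅ : Set (Finset V))
            = chainsOn ∅ ⊓ LinearMap.ker (bnd V) from rfl,
        show chainsOn (∅ : Set (Finset V)) = Finsupp.supported (ZMod 2) (ZMod 2) ∅ from rfl,
        Finsupp.supported_empty, bot_inf_eq]
    rw [h1, h2, h3, Set.ncard_empty, finrank_bot]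
  | succ m ih =>
    intro hm1 d
    have hm : m < n := hm1
    have hmn : m ≤ n := le_of_lt hm
    have hsfin := skel_finite σ m d
    by_cases hd : (σ ⟨m, hm⟩).card = d
    · have hskel := skel_succ_of_eq σ hm hd
      have hle : finrank (ZMod 2) (cyclesOn (skel σ m d))
          ≤ finrank (ZMod 2) (cyclesOn (skel σ (m + 1) d)) := by
        apply cyclesOn_finrank_mono (skel_finite σ (m + 1) d)
        rw [hskel]; exact Set.subset_insert _ _
      have hub : finrank (ZMod 2) (cyclesOn (skel σ (m + 1) d))
          ≤ finrank (ZMod 2) (cyclesOn (skel σ m d)) + 1 := by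
        rw [hskel]; exact cyclesOn_insert_le hsfin _
      have hposiff : Positive σ ⟨m, hm⟩ ↔
          finrank (ZMod 2) (cyclesOn (skel σ (m + 1) d))
            = finrank (ZMod 2) (cyclesOn (skel σ m d)) + 1 := by
        unfold Positive
        rw [hd]
      by_cases hpos : Positive σ ⟨m, hm⟩
      · have hset : {i : Fin n | i.val < m + 1 ∧ (σ i).card = d ∧ Positive σ i}
            = insert ⟨m, hm⟩ {i : Fin n | i.val < m ∧ (σ i).card = d ∧ Positive σ i} := by
          ext i
          simp only [Set.mem_setOf_eq, Set.mem_insert_iff]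
          constructor
          · rintro ⟨hlt, hc, hp⟩
            rcases Nat.lt_succ_iff_lt_or_eq.mp hlt with h | h
            · exact Or.inr ⟨h, hc, hp⟩
            · exact Or.inl (Fin.ext h)
          · rintro (rfl | ⟨hlt, hc, hp⟩)
            · exact ⟨Nat.lt_succ_self m, hd, hpos⟩
            · exact ⟨Nat.lt_succ_of_lt hlt, hc, hp⟩
        have hnm : (⟨m, hm⟩ : Fin n)
            ∉ {i : Fin n | i.val < m ∧ (σ i).card = d ∧ Positive σ i} := by
          intro h
          exact absurd h.1 (lt_irrefl m)
        rw [hset, Set.ncard_insert_of_notMem hnm (Set.toFinite _), ih hmn d,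
          hposiff.mp hpos]
      · have heq : finrank (ZMod 2) (cyclesOn (skel σ (m + 1) d))
            = finrank (ZMod 2) (cyclesOn (skel σ m d)) := by
          have := (not_iff_not.mpr hposiff).mp hpos
          omega
        have hset : {i : Fin n | i.val < m + 1 ∧ (σ i).card = d ∧ Positive σ i}
            = {i : Fin n | i.val < m ∧ (σ i).card = d ∧ Positive σ i} := by
          ext i
          simp only [Set.mem_setOf_eq]
          constructor
          · rintro ⟨hlt, hc, hp⟩
            rcases Nat.lt_succ_iff_lt_or_eq.mp hlt with h | h
            · exact ⟨h, hc, hp⟩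
            · exact absurd hp (by rwa [show i = ⟨m, hm⟩ from Fin.ext h])
          · rintro ⟨hlt, hc, hp⟩
            exact ⟨Nat.lt_succ_of_lt hlt, hc, hp⟩
        rw [hset, ih hmn d, heq]
    · have hskel := skel_succ_of_ne σ hm hd
      have hset : {i : Fin n | i.val < m + 1 ∧ (σ i).card = d ∧ Positive σ i}
          = {i : Fin n | i.val < m ∧ (σ i).card = d ∧ Positive σ i} := by
        ext i
        simp only [Set.mem_setOf_eq]
        constructor
        · rintro ⟨hlt, hc, hp⟩
          rcases Nat.lt_succ_iff_lt_or_eq.mp hlt with h | h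
          · exact ⟨h, hc, hp⟩
          · exact absurd hc (by rwa [show i = ⟨m, hm⟩ from Fin.ext h])
        · rintro ⟨hlt, hc, hp⟩
          exact ⟨Nat.lt_succ_of_lt hlt, hc, hp⟩
      rw [hset, hskel, ih hmn d]

theorem count_positive_negative'
    {V : Type} [DecidableEq V] {n : ℕ} (σ : Fin n → Finset V)
    (hinj : Function.Injective σ)
    (m : ℕ) (hm : m ≤ n) (k : ℕ) :
    {i : Fin n | i.val < m ∧ (σ i).card = k + 1 ∧ Positive σ i}.ncard
        = Module.finrank (ZMod 2) (cyclesOn (skel σ m (k + 1))) ∧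
    {i : Fin n | i.val < m ∧ (σ i).card = k + 2 ∧ ¬ Positive σ i}.ncard
        = Module.finrank (ZMod 2) (boundariesOn (skel σ m (k + 2))) := by
  constructor
  · exact pos_count σ hinj m hm (k + 1)
  · have hTsplit : {i : Fin n | i.val < m ∧ (σ i).card = k + 2}
        = {i : Fin n | i.val < m ∧ (σ i).card = k + 2 ∧ Positive σ i}
          ∪ {i : Fin n | i.val < m ∧ (σ i).card = k + 2 ∧ ¬ Positive σ i} := by
      ext i; simp only [Set.mem_setOf_eq, Set.mem_union]; tauto
    have hdisj : Disjoint
        {i : Fin n | i.val < m ∧ (σ i).card = k + 2 ∧ Positive σ i}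
        {i : Fin n | i.val < m ∧ (σ i).card = k + 2 ∧ ¬ Positive σ i} := by
      rw [Set.disjoint_left]
      rintro i ⟨-, -, hp⟩ ⟨-, -, hnp⟩
      exact hnp hp
    have hT : {i : Fin n | i.val < m ∧ (σ i).card = k + 2}.ncard
        = {i : Fin n | i.val < m ∧ (σ i).card = k + 2 ∧ Positive σ i}.ncard
          + {i : Fin n | i.val < m ∧ (σ i).card = k + 2 ∧ ¬ Positive σ i}.ncard := by
      rw [hTsplit, Set.ncard_union_eq hdisj (Set.toFinite _) (Set.toFinite _)]
    have hsk := skel_ncard σ hinj m (k + 2)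
    have hch := chainsOn_finrank (skel_finite σ m (k + 2))
    have hrank := chains_rank_eq (skel_finite σ m (k + 2))
    have hpc := pos_count σ hinj m hm (k + 2)
    omega
end Aux

/-- the number of positive k-simplices among σ_1, …, σ_m equals
dim Z_k(K_m), and the number of negative (k+1)-simplices among σ_1, …, σ_m
equals dim B_k(K_m) (ℤ/2 coefficients; a k-simplex has k+1 vertices). -/
theorem count_positive_negative
    {V : Type} [DecidableEq V] {n : ℕ} (σ : Fin n → Finset V)
    (hinj : Function.Injective σ)
    (hne : ∀ i, (σ i).Nonempty)
    (hfilt : ∀ j : Fin n, ∀ t ⊆ σ j, t.Nonempty → ∃ i ≤ j, σ i = t)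
    (m : ℕ) (hm : m ≤ n) (k : ℕ) :
    {i : Fin n | i.val < m ∧ (σ i).card = k + 1 ∧ Positive σ i}.ncard
        = Module.finrank (ZMod 2) (cyclesOn (skel σ m (k + 1))) ∧
    {i : Fin n | i.val < m ∧ (σ i).card = k + 2 ∧ ¬ Positive σ i}.ncard
        = Module.finrank (ZMod 2) (boundariesOn (skel σ m (k + 2))) := by
  exact count_positive_negative' σ hinj m hm k
end
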